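/- Let D ≥ 2 be a squarefree integer and K = ℚ(√D). There exists a totally positive α ∈ O_K with p_K(α) = 7 if and only if D ∉ {2, 5}. -/

import Mathlib

/-!
Total positivity of `x + y ω_D` is a condition on integers: the trace `t` and `4 N = t² - Δ y²`
(`Δ` the discriminant) must both be positive. A part `β` of a partition of `α` is totally
positive with `α - β` totally nonnegative, which confines `β` to an explicit box, so `p_K(α)` is
computed by a finite search. Moreover `p_K` is invariant under Galois conjugation and under
multiplication by totally positive units, and `p_K(α) ≤ p_K(α + γ)` for `γ ≻ 0`.

For `D = 2` and `D = 5` these symmetries move every `α ≻ 0` into the cone spanned by `1` and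
`2 + √2`, resp. `1` and `ω_5 ^ 2 = 1 + ω_5`. There `p_K ≠ 7` is checked directly at the finitely
many elements with small first coordinate, and every other element of the cone exceeds, by an
element of the cone, one with `p_K ≥ 8`. For `D ∈ {3, 13, 17, 21}` one computes `p_K(5 + ω_D) = 7`. For all
other `D` the only totally positive elements below `5` are `1, …, 5`, so `p_K(5)` is the number
`p(5) = 7` of partitions of the integer `5`.
-/

noncomputable section

/-- `ω_D`, so that `(1, ω_D)` is an integral basis of `𝓞(ℚ(√D))`. -/
def omegaD (D : ℤ) : ℝ := if D % 4 = 1 then (1 + Real.sqrt D) / 2 else Real.sqrt D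

/-- The Galois conjugate `ω_D′` of `ω_D`. -/
def omegaD' (D : ℤ) : ℝ := if D % 4 = 1 then (1 - Real.sqrt D) / 2 else -(Real.sqrt D)

/-- `ξ_D = -ω_D′`. -/
def xiD (D : ℤ) : ℝ := -omegaD' D

/-- The real embedding of `𝓞 K`, an element `(x, y)` in the integral basis
`(1, ω_D)` being sent to `x + y ω_D`. -/
def emb (D : ℤ) (a : ℤ × ℤ) : ℝ := a.1 + a.2 * omegaD D

/-- The conjugate real embedding, sending `(x, y)` to `x + y ω_D′`. -/
def embConj (D : ℤ) (a : ℤ × ℤ) : ℝ := a.1 + a.2 * omegaD' D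

/-- An element of `𝓞 K` is totally positive if it and its conjugate are positive. -/
def TotPos (D : ℤ) (a : ℤ × ℤ) : Prop := 0 < emb D a ∧ 0 < embConj D a

/-- The partition function `p_K` of `K = ℚ(√D)`: the number of multisets of
totally positive integers of `K` with sum `α`. -/
def pK (D : ℤ) (α : ℤ × ℤ) : ℕ :=
  Nat.card {m : Multiset (ℤ × ℤ) // (∀ β ∈ m, TotPos D β) ∧ m.sum = α}

end

section Partitions

variable {G : Type*} [AddCommMonoid G]

/-- The partitions of `α` into parts satisfying `Q`, so that
`pK D α = Nat.card (Partitions (TotPos D) α)`. -/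
def Partitions (Q : G → Prop) (α : G) : Type _ :=
  {m : Multiset G // (∀ β ∈ m, Q β) ∧ m.sum = α}

variable {Q : G → Prop}

theorem card_partitions_le_add {α β : G} [Finite (Partitions Q (α + β))] (hβ : Q β) :
    Nat.card (Partitions Q α) ≤ Nat.card (Partitions Q (α + β)) := by
  refine Nat.card_le_card_of_injective (fun m => ⟨β ::ₘ m.1, fun γ hγ => ?_, ?_⟩)
    fun m m' h => ?_
  · rcases Multiset.mem_cons.1 hγ with rfl | hγ
    exacts [hβ, m.2.1 γ hγ]
  · rw [Multiset.sum_cons, m.2.2, add_comm]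
  · exact Subtype.ext <| (Multiset.cons_inj_right β).1 (congrArg Subtype.val h)

theorem card_partitions_addEquiv {H : Type*} [AddCommMonoid H] {Q' : H → Prop} (e : G ≃+ H)
    (he : ∀ a, Q' (e a) ↔ Q a) (α : G) :
    Nat.card (Partitions Q' (e α)) = Nat.card (Partitions Q α) := by
  refine Nat.card_congr
    { toFun := fun m => ⟨m.1.map e.symm, fun γ hγ => ?_, ?_⟩
      invFun := fun m => ⟨m.1.map e, fun γ hγ => ?_, ?_⟩
      left_inv := fun m => Subtype.ext ?_
      right_inv := fun m => Subtype.ext ?_ }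
  · obtain ⟨γ, hγ', rfl⟩ := Multiset.mem_map.1 hγ
    exact (he _).1 (by simpa using m.2.1 γ hγ')
  · rw [← map_multiset_sum, m.2.2, AddEquiv.symm_apply_apply]
  · obtain ⟨γ, hγ', rfl⟩ := Multiset.mem_map.1 hγ
    exact (he γ).2 (m.2.1 γ hγ')
  · rw [← map_multiset_sum, m.2.2]
  · simp [Multiset.map_map]
  · simp [Multiset.map_map]

end Partitions

section Enumeration

variable {G : Type*} [AddCommGroup G]

def withCopies (P : G → Prop) [DecidablePred P] (β : G) (e : G → List (Multiset G)) :
    ℕ → G → List (Multiset G)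
  | 0, α => e α
  | n + 1, α => e α ++ if P (α - β) then (withCopies P β e n (α - β)).map (β ::ₘ ·) else []

variable {P : G → Prop} [DecidablePred P]

theorem exists_of_mem_withCopies {β : G} {e : G → List (Multiset G)} {n : ℕ} {α : G}
    {m : Multiset G} (hm : m ∈ withCopies P β e n α) :
    ∃ k : ℕ, ∃ m' ∈ e (α - k • β), m = m' + Multiset.replicate k β := by
  induction n generalizing α m with
  | zero => exact ⟨0, m, by simpa [withCopies] using hm, by simp⟩
  | succ n ih =>
    simp only [withCopies, List.mem_append] at hm
    rcases hm with hm | hm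
    · exact ⟨0, m, by simpa using hm, by simp⟩
    split_ifs at hm with hP
    · obtain ⟨m₁, hm₁, rfl⟩ := List.mem_map.1 hm
      obtain ⟨k, m', hm', rfl⟩ := ih hm₁
      refine ⟨k + 1, m', by rwa [succ_nsmul', ← sub_sub], ?_⟩
      rw [Multiset.replicate_succ, Multiset.add_cons]
    · simp at hm

theorem add_replicate_mem_withCopies {β : G} {e : G → List (Multiset G)} {k n : ℕ} {α : G}
    {m : Multiset G} (hkn : k ≤ n) (hP : ∀ j ≤ k, 0 < j → P (α - j • β))
    (hm : m ∈ e (α - k • β)) : m + Multiset.replicate k β ∈ withCopies P β e n α := by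
  induction k generalizing n α with
  | zero => cases n <;> simp_all [withCopies]
  | succ k ih =>
    cases n with
    | zero => omega
    | succ n =>
      have hsub : ∀ j : ℕ, α - (j + 1) • β = α - β - j • β := fun j => by
        rw [succ_nsmul', sub_sub]
      have hP1 : P (α - β) := by simpa using hP 1 (by omega) one_pos
      simp only [withCopies, List.mem_append, if_pos hP1, List.mem_map]
      refine Or.inr ⟨m + Multiset.replicate k β, ih (by omega) (fun j hj hj0 => ?_) ?_, ?_⟩
      · rw [← hsub]; exact hP (j + 1) (by omega) (by omega)
      · rwa [← hsub]
      · rw [Multiset.replicate_succ, Multiset.add_cons]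

variable [DecidableEq G]

/-- The multisets with elements in `l` and sum `α`, found by choosing the multiplicity of each
element of `l` in turn (see `mem_enumPartitions_iff`). The predicate `P` only prunes the search:
it must hold for every sum of elements of `l`. -/
def enumPartitions (f : G →+ ℤ) (P : G → Prop) [DecidablePred P] :
    List G → G → List (Multiset G)
  | [], α => if α = 0 then [0] else []
  | β :: l, α => withCopies P β (enumPartitions f P l) (f α).toNat α

variable {f : G →+ ℤ}

theorem sum_eq_of_mem_enumPartitions {l : List G} {α : G} {m : Multiset G}
    (hm : m ∈ enumPartitions f P l α) : (∀ β ∈ m, β ∈ l) ∧ m.sum = α := by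
  induction l generalizing α m with
  | nil =>
    simp only [enumPartitions] at hm
    split_ifs at hm <;> simp_all
  | cons β l ih =>
    obtain ⟨k, m', hm', rfl⟩ := exists_of_mem_withCopies hm
    obtain ⟨hl, hsum⟩ := ih hm'
    refine ⟨fun γ hγ => ?_, by simp [hsum]⟩
    rcases Multiset.mem_add.1 hγ with hγ | hγ
    · exact List.mem_cons_of_mem _ (hl γ hγ)
    · rw [Multiset.eq_of_mem_replicate hγ]; exact List.mem_cons_self

theorem mem_enumPartitions {l : List G} (hf : ∀ β ∈ l, 0 < f β)
    (hP : ∀ s : Multiset G, (∀ β ∈ s, β ∈ l) → P s.sum) {m : Multiset G}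
    (hm : ∀ β ∈ m, β ∈ l) : m ∈ enumPartitions f P l m.sum := by
  induction l generalizing m with
  | nil =>
    obtain rfl : m = 0 := Multiset.eq_zero_of_forall_notMem fun β hβ => by simpa using hm β hβ
    simp [enumPartitions]
  | cons β l ih =>
    set m' := m.filter (· ≠ β)
    set k := m.count β
    have hsplit : m' + Multiset.replicate k β = m := by
      rw [← Multiset.filter_eq', add_comm]; simpa using Multiset.filter_add_not (· = β) m
    have hm' : ∀ γ ∈ m', γ ∈ l := fun γ hγ => by
      obtain ⟨hγm, hγβ⟩ := Multiset.mem_filter.1 hγ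
      exact (List.mem_cons.1 (hm γ hγm)).resolve_left hγβ
    have hf' : 0 ≤ f m'.sum := by
      rw [map_multiset_sum]
      exact Multiset.sum_nonneg fun t ht => by
        obtain ⟨γ, hγ, rfl⟩ := Multiset.mem_map.1 ht
        exact (hf γ (List.mem_cons_of_mem _ (hm' γ hγ))).le
    have hsum : m.sum = m'.sum + k • β := by
      rw [← hsplit, Multiset.sum_add, Multiset.sum_replicate]
    suffices m' + Multiset.replicate k β ∈
        withCopies P β (enumPartitions f P l) (f m.sum).toNat m.sum by rwa [hsplit] at this
    refine add_replicate_mem_withCopies ?_ (fun j hj _ => ?_) ?_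
    · have hβ := hf β List.mem_cons_self
      have : f m.sum = f m'.sum + k * f β := by rw [hsum, map_add, map_nsmul, nsmul_eq_mul]
      have : (k : ℤ) ≤ k * f β := le_mul_of_one_le_right (by positivity) hβ
      omega
    · have : m.sum - j • β = (m' + Multiset.replicate (k - j) β).sum := by
        rw [Multiset.sum_add, Multiset.sum_replicate, hsum, add_sub_assoc, sub_nsmul _ hj,
          sub_eq_add_neg]
      rw [this]
      refine hP _ fun γ hγ => ?_
      rcases Multiset.mem_add.1 hγ with hγ | hγ
      · exact List.mem_cons_of_mem _ (hm' γ hγ)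
      · rw [Multiset.eq_of_mem_replicate hγ]; exact List.mem_cons_self
    · rw [hsum, add_sub_cancel_right]
      exact ih (fun γ hγ => hf γ (List.mem_cons_of_mem _ hγ))
        (fun s hs => hP s fun γ hγ => List.mem_cons_of_mem _ (hs γ hγ)) hm'

theorem mem_enumPartitions_iff {l : List G} (hf : ∀ β ∈ l, 0 < f β)
    (hP : ∀ s : Multiset G, (∀ β ∈ s, β ∈ l) → P s.sum) {α : G} {m : Multiset G} :
    m ∈ enumPartitions f P l α ↔ (∀ β ∈ m, β ∈ l) ∧ m.sum = α :=
  ⟨sum_eq_of_mem_enumPartitions, fun ⟨hm, hsum⟩ => hsum ▸ mem_enumPartitions hf hP hm⟩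

def Partitions.equivEnum {Q : G → Prop} {l : List G} (hl : ∀ β ∈ l, Q β ∧ 0 < f β)
    (hP : ∀ s : Multiset G, (∀ β ∈ s, β ∈ l) → P s.sum) {α : G}
    (hparts : ∀ m : Multiset G, (∀ β ∈ m, Q β) → m.sum = α → ∀ β ∈ m, β ∈ l) :
    Partitions Q α ≃ (enumPartitions f P l α).toFinset :=
  Equiv.subtypeEquivRight fun m => by
    rw [List.mem_toFinset, mem_enumPartitions_iff (fun β hβ => (hl β hβ).2) hP]
    exact ⟨fun ⟨hQ, hsum⟩ => ⟨hparts m hQ hsum, hsum⟩,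
      fun ⟨hl', hsum⟩ => ⟨fun β hβ => (hl β (hl' β hβ)).1, hsum⟩⟩

end Enumeration

theorem pos_and_pos_iff {R : Type*} [CommRing R] [LinearOrder R] [IsStrictOrderedRing R]
    {u v : R} : 0 < u ∧ 0 < v ↔ 0 < u + v ∧ 0 < u * v := by
  refine ⟨fun ⟨hu, hv⟩ => ⟨add_pos hu hv, mul_pos hu hv⟩, fun ⟨hs, hp⟩ => ?_⟩
  rcases lt_or_ge 0 u with hu | hu
  · exact ⟨hu, pos_of_mul_pos_right hp hu.le⟩
  · nlinarith

theorem nonneg_and_nonneg_iff {R : Type*} [CommRing R] [LinearOrder R] [IsStrictOrderedRing R]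
    {u v : R} : 0 ≤ u ∧ 0 ≤ v ↔ 0 ≤ u + v ∧ 0 ≤ u * v := by
  refine ⟨fun ⟨hu, hv⟩ => ⟨add_nonneg hu hv, mul_nonneg hu hv⟩, fun ⟨hs, hp⟩ => ?_⟩
  rcases lt_or_ge u 0 with hu | hu
  · nlinarith
  · rcases lt_or_ge v 0 with hv | hv
    · nlinarith
    · exact ⟨hu, hv⟩

namespace RealQuadratic

variable {D : ℤ}

def trace (D : ℤ) (a : ℤ × ℤ) : ℤ := if D % 4 = 1 then 2 * a.1 + a.2 else 2 * a.1

def disc (D : ℤ) : ℤ := if D % 4 = 1 then D else 4 * D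

def fourNorm (D : ℤ) (a : ℤ × ℤ) : ℤ := trace D a ^ 2 - disc D * a.2 ^ 2

theorem sqrt_mul_self_cast (hD : 0 ≤ D) : √(D : ℝ) * √(D : ℝ) = D :=
  Real.mul_self_sqrt (by exact_mod_cast hD)

theorem cast_trace (D : ℤ) (a : ℤ × ℤ) : (trace D a : ℝ) = emb D a + embConj D a := by
  unfold trace emb embConj omegaD omegaD'
  split_ifs <;> push_cast <;> ring

theorem cast_fourNorm (hD : 0 ≤ D) (a : ℤ × ℤ) :
    (fourNorm D a : ℝ) = 4 * (emb D a * embConj D a) := by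
  unfold fourNorm disc trace emb embConj omegaD omegaD'
  split_ifs <;> push_cast
  · linear_combination (a.2 : ℝ) ^ 2 * sqrt_mul_self_cast hD
  · linear_combination 4 * (a.2 : ℝ) ^ 2 * sqrt_mul_self_cast hD

theorem totPos_iff (hD : 0 ≤ D) {a : ℤ × ℤ} :
    TotPos D a ↔ 0 < trace D a ∧ 0 < fourNorm D a := by
  have h4 : (0 : ℝ) < fourNorm D a ↔ 0 < emb D a * embConj D a := by
    rw [cast_fourNorm hD]; exact mul_pos_iff_of_pos_left four_pos
  rw [TotPos, pos_and_pos_iff, ← cast_trace, ← h4, Int.cast_pos, Int.cast_pos]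

@[simp]
theorem emb_add (a b : ℤ × ℤ) : emb D (a + b) = emb D a + emb D b := by
  simp only [emb, Prod.fst_add, Prod.snd_add, Int.cast_add]; ring

@[simp]
theorem embConj_add (a b : ℤ × ℤ) : embConj D (a + b) = embConj D a + embConj D b := by
  simp only [embConj, Prod.fst_add, Prod.snd_add, Int.cast_add]; ring

def totNonneg (D : ℤ) : AddSubmonoid (ℤ × ℤ) where
  carrier := {a | 0 ≤ emb D a ∧ 0 ≤ embConj D a}
  add_mem' ha hb := by
    simp only [Set.mem_ofPred_eq, emb_add, embConj_add] at *
    exact ⟨add_nonneg ha.1 hb.1, add_nonneg ha.2 hb.2⟩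
  zero_mem' := by simp [emb, embConj]

theorem mem_totNonneg_of_totPos {a : ℤ × ℤ} (h : TotPos D a) : a ∈ totNonneg D :=
  ⟨h.1.le, h.2.le⟩

theorem mem_totNonneg_iff (hD : 0 ≤ D) {a : ℤ × ℤ} :
    a ∈ totNonneg D ↔ 0 ≤ trace D a ∧ 0 ≤ fourNorm D a := by
  change 0 ≤ emb D a ∧ 0 ≤ embConj D a ↔ _
  have h4 : (0 : ℝ) ≤ fourNorm D a ↔ 0 ≤ emb D a * embConj D a := by
    rw [cast_fourNorm hD]; exact mul_nonneg_iff_of_pos_left four_pos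
  rw [nonneg_and_nonneg_iff, ← cast_trace, ← h4, Int.cast_nonneg_iff, Int.cast_nonneg_iff]

theorem abs_snd_le_two_mul_fst (hD : 2 ≤ D) {a : ℤ × ℤ} (ha : a ∈ totNonneg D) :
    |a.2| ≤ 2 * a.1 := by
  obtain ⟨ht, hn⟩ := (mem_totNonneg_iff (by omega)).1 ha
  unfold fourNorm disc trace at *
  split_ifs at ht hn with h4
  · have : 5 ≤ D := by omega
    exact abs_le.2 ⟨by omega, by nlinarith⟩
  · exact abs_le.2 ⟨by nlinarith, by nlinarith⟩

theorem fst_pos_of_totPos (hD : 2 ≤ D) {a : ℤ × ℤ} (ha : TotPos D a) : 0 < a.1 := by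
  have h := abs_snd_le_two_mul_fst hD (mem_totNonneg_of_totPos ha)
  obtain ⟨ht, -⟩ := (totPos_iff (by omega)).1 ha
  unfold trace at ht
  split_ifs at ht <;> cases abs_le.1 h <;> omega

/-- Multiplication in the basis `(1, ω_D)`, where `ω_D ^ 2 = ω_D + (D - 1) / 4` if `D ≡ 1 mod 4`
and `ω_D ^ 2 = D` otherwise. -/
def mulCoord (D : ℤ) (a b : ℤ × ℤ) : ℤ × ℤ :=
  if D % 4 = 1 then (a.1 * b.1 + D / 4 * a.2 * b.2, a.1 * b.2 + a.2 * b.1 + a.2 * b.2)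
  else (a.1 * b.1 + D * a.2 * b.2, a.1 * b.2 + a.2 * b.1)

theorem mulCoord_comm (D : ℤ) (a b : ℤ × ℤ) : mulCoord D a b = mulCoord D b a := by
  unfold mulCoord; split_ifs <;> ext <;> dsimp only <;> ring

theorem mulCoord_assoc (D : ℤ) (a b c : ℤ × ℤ) :
    mulCoord D (mulCoord D a b) c = mulCoord D a (mulCoord D b c) := by
  unfold mulCoord; split_ifs <;> ext <;> dsimp only <;> ring

theorem one_mulCoord (D : ℤ) (a : ℤ × ℤ) : mulCoord D (1, 0) a = a := by
  unfold mulCoord; split_ifs <;> ext <;> dsimp only <;> ring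

theorem mulCoord_add (D : ℤ) (a b c : ℤ × ℤ) :
    mulCoord D a (b + c) = mulCoord D a b + mulCoord D a c := by
  unfold mulCoord; split_ifs <;> ext <;> dsimp only [Prod.fst_add, Prod.snd_add] <;> ring

theorem cast_ediv_four (h : D % 4 = 1) : ((D / 4 : ℤ) : ℝ) = (D - 1) / 4 := by
  have : 4 * (D / 4) = D - 1 := by omega
  rw [eq_div_iff four_ne_zero, mul_comm]
  exact_mod_cast this

theorem emb_mulCoord (hD : 0 ≤ D) (a b : ℤ × ℤ) :
    emb D (mulCoord D a b) = emb D a * emb D b := by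
  unfold mulCoord emb omegaD
  split_ifs with h
  · push_cast [cast_ediv_four h]
    linear_combination (-(a.2 * b.2) / 4 : ℝ) * sqrt_mul_self_cast hD
  · push_cast
    linear_combination (-(a.2 * b.2) : ℝ) * sqrt_mul_self_cast hD

theorem embConj_mulCoord (hD : 0 ≤ D) (a b : ℤ × ℤ) :
    embConj D (mulCoord D a b) = embConj D a * embConj D b := by
  unfold mulCoord embConj omegaD'
  split_ifs with h
  · push_cast [cast_ediv_four h]
    linear_combination (-(a.2 * b.2) / 4 : ℝ) * sqrt_mul_self_cast hD
  · push_cast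
    linear_combination (-(a.2 * b.2) : ℝ) * sqrt_mul_self_cast hD

theorem totPos_mulCoord_iff (hD : 0 ≤ D) {ε : ℤ × ℤ} (hε : TotPos D ε) (a : ℤ × ℤ) :
    TotPos D (mulCoord D ε a) ↔ TotPos D a := by
  rw [TotPos, TotPos, emb_mulCoord hD, embConj_mulCoord hD, mul_pos_iff_of_pos_left hε.1,
    mul_pos_iff_of_pos_left hε.2]

def unitMulEquiv (D : ℤ) (ε η : ℤ × ℤ) (h : mulCoord D ε η = (1, 0)) : ℤ × ℤ ≃+ ℤ × ℤ where
  toFun := mulCoord D ε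
  invFun := mulCoord D η
  left_inv a := by rw [← mulCoord_assoc, mulCoord_comm D η, h, one_mulCoord]
  right_inv a := by rw [← mulCoord_assoc, h, one_mulCoord]
  map_add' := mulCoord_add D ε

@[simp]
theorem unitMulEquiv_apply (ε η : ℤ × ℤ) (h : mulCoord D ε η = (1, 0)) (a : ℤ × ℤ) :
    unitMulEquiv D ε η h a = mulCoord D ε a := rfl

/-- Galois conjugation, using `ω_D′ = 1 - ω_D` if `D ≡ 1 mod 4` and `ω_D′ = -ω_D` otherwise. -/
def conj (D : ℤ) : ℤ × ℤ ≃+ ℤ × ℤ where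
  toFun a := if D % 4 = 1 then (a.1 + a.2, -a.2) else (a.1, -a.2)
  invFun a := if D % 4 = 1 then (a.1 + a.2, -a.2) else (a.1, -a.2)
  left_inv a := by split_ifs <;> ext <;> simp
  right_inv a := by split_ifs <;> ext <;> simp
  map_add' a b := by split_ifs <;> ext <;> simp <;> ring

theorem conj_apply (a : ℤ × ℤ) :
    conj D a = if D % 4 = 1 then (a.1 + a.2, -a.2) else (a.1, -a.2) := rfl

theorem totPos_conj_iff (a : ℤ × ℤ) : TotPos D (conj D a) ↔ TotPos D a := by
  have : emb D (conj D a) = embConj D a ∧ embConj D (conj D a) = emb D a := by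
    unfold emb embConj omegaD omegaD'
    rw [conj_apply]
    split_ifs <;> push_cast <;> constructor <;> ring
  rw [TotPos, TotPos, this.1, this.2, and_comm]

theorem pK_addEquiv (e : ℤ × ℤ ≃+ ℤ × ℤ) (he : ∀ a, TotPos D (e a) ↔ TotPos D a)
    (α : ℤ × ℤ) : pK D (e α) = pK D α :=
  card_partitions_addEquiv e he α

/-- A box of totally positive elements containing every part of a partition of `α`. Large parts
come first, which keeps the search in `enumPartitions` short. -/
def candidates (D : ℤ) (α : ℤ × ℤ) : List (ℤ × ℤ) :=
  (((List.range α.1.toNat).map fun i : ℕ => α.1 - i) ×ˢ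
    ((List.range (4 * α.1.toNat + 1)).map fun j : ℕ => (j : ℤ) - 2 * α.1)).filter
    fun β => 0 < trace D β ∧ 0 < fourNorm D β

def partitionCount (D : ℤ) (α : ℤ × ℤ) : ℕ :=
  (enumPartitions (AddMonoidHom.fst ℤ ℤ) (fun a => 0 ≤ trace D a ∧ 0 ≤ fourNorm D a)
    (candidates D α) α).toFinset.card

theorem mem_candidates (hD : 2 ≤ D) {α β : ℤ × ℤ} (hβ : TotPos D β)
    (hαβ : α - β ∈ totNonneg D) : β ∈ candidates D α := by
  have h1 := fst_pos_of_totPos hD hβ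
  have h2 := abs_le.1 (abs_snd_le_two_mul_fst hD (mem_totNonneg_of_totPos hβ))
  have h3 := abs_nonneg (α - β).2 |>.trans (abs_snd_le_two_mul_fst hD hαβ)
  simp only [Prod.fst_sub] at h3
  rw [candidates, List.mem_filter, decide_eq_true_iff, ← totPos_iff (by omega)]
  refine ⟨?_, hβ⟩
  rw [← Prod.mk.eta (p := β), List.mem_product, List.mem_map, List.mem_map]
  exact ⟨⟨(α.1 - β.1).toNat, List.mem_range.2 (by omega), by omega⟩,
    ⟨(β.2 + 2 * α.1).toNat, List.mem_range.2 (by omega), by omega⟩⟩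

theorem totPos_of_mem_candidates (hD : 0 ≤ D) {α β : ℤ × ℤ} (hβ : β ∈ candidates D α) :
    TotPos D β :=
  (totPos_iff hD).2 (of_decide_eq_true (List.mem_filter.1 hβ).2)

theorem sub_mem_totNonneg_of_mem {m : Multiset (ℤ × ℤ)} (hm : ∀ γ ∈ m, TotPos D γ)
    {β : ℤ × ℤ} (hβ : β ∈ m) : m.sum - β ∈ totNonneg D := by
  rw [← Multiset.sum_erase hβ, add_sub_cancel_left]
  exact AddSubmonoid.multiset_sum_mem _ _ fun γ hγ =>
    mem_totNonneg_of_totPos (hm γ (Multiset.mem_of_mem_erase hγ))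

def partitionsEquiv (hD : 2 ≤ D) (α : ℤ × ℤ) :
    Partitions (TotPos D) α ≃ (enumPartitions (AddMonoidHom.fst ℤ ℤ)
      (fun a => 0 ≤ trace D a ∧ 0 ≤ fourNorm D a) (candidates D α) α).toFinset :=
  Partitions.equivEnum
    (fun β hβ => ⟨totPos_of_mem_candidates (by omega) hβ,
      fst_pos_of_totPos hD (totPos_of_mem_candidates (by omega) hβ)⟩)
    (fun s hs => (mem_totNonneg_iff (by omega)).1 <| AddSubmonoid.multiset_sum_mem _ _
      fun β hβ => mem_totNonneg_of_totPos (totPos_of_mem_candidates (by omega) (hs β hβ)))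
    (fun m hm hsum β hβ => mem_candidates hD (hm β hβ) (hsum ▸ sub_mem_totNonneg_of_mem hm hβ))

theorem pK_eq_partitionCount (hD : 2 ≤ D) (α : ℤ × ℤ) : pK D α = partitionCount D α :=
  (Nat.card_congr (partitionsEquiv hD α)).trans (Nat.card_eq_finsetCard _)

theorem finite_partitions (hD : 2 ≤ D) (α : ℤ × ℤ) : Finite (Partitions (TotPos D) α) :=
  Finite.of_equiv _ (partitionsEquiv hD α).symm

theorem pK_le_pK_add (hD : 2 ≤ D) (α : ℤ × ℤ) {β : ℤ × ℤ} (hβ : TotPos D β) :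
    pK D α ≤ pK D (α + β) :=
  have := finite_partitions hD (α + β)
  card_partitions_le_add hβ

theorem pK_le_pK_add_of_mem_closure (hD : 2 ≤ D) {γ : ℤ × ℤ}
    (hγ : γ ∈ AddSubmonoid.closure {β : ℤ × ℤ | TotPos D β}) (α : ℤ × ℤ) :
    pK D α ≤ pK D (α + γ) := by
  induction hγ using AddSubmonoid.closure_induction generalizing α with
  | mem β hβ => exact pK_le_pK_add hD α hβ
  | zero => simp
  | add β γ _ _ hβ hγ => exact (hβ α).trans (add_assoc α β γ ▸ hγ (α + β))

/-- The cone spanned by `1` and `c + ω_D`. -/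
def cone (c : ℤ) : Set (ℤ × ℤ) := {a | 0 ≤ a.2 ∧ c * a.2 ≤ a.1}

theorem totPos_mk_zero {k : ℤ} (hk : 0 < k) : TotPos D (k, 0) := by
  simp [TotPos, emb, embConj, hk]

theorem cone_subset_closure {c : ℤ} (hc : TotPos D (c, 1)) :
    cone c ⊆ AddSubmonoid.closure {β : ℤ × ℤ | TotPos D β} := by
  rintro ⟨a, b⟩ ⟨hb, hab⟩
  obtain ⟨n, rfl⟩ := Int.eq_ofNat_of_zero_le hb
  obtain ⟨k, hk⟩ := Int.eq_ofNat_of_zero_le (sub_nonneg.2 hab)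
  have : ((a, n) : ℤ × ℤ) = k • (1, 0) + n • (c, 1) := by
    ext <;> simp
    linarith
  have hmem : ∀ β, TotPos D β → β ∈ AddSubmonoid.closure {β : ℤ × ℤ | TotPos D β} :=
    fun β hβ => AddSubmonoid.subset_closure hβ
  rw [this]
  exact add_mem (nsmul_mem (hmem _ (totPos_mk_zero one_pos)) _) (nsmul_mem (hmem _ hc) _)

theorem pK_ne_seven_of_mem_cone (hD : 2 ≤ D) {c N : ℤ} (hc : 0 < c) (hN : 0 ≤ N) (hcN : c ∣ N)
    (hgen : TotPos D (c, 1))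
    (hsmall : ∀ a ∈ Finset.Ico 1 N, ∀ b ∈ Finset.Icc 0 (a / c), partitionCount D (a, b) ≠ 7)
    (hlarge : ∀ b ∈ Finset.Icc 0 (N / c), 8 ≤ partitionCount D (N, b))
    {α : ℤ × ℤ} (hα : α ∈ cone c) (hα1 : 0 < α.1) : pK D α ≠ 7 := by
  obtain ⟨a, b⟩ := α
  obtain ⟨hb, hab⟩ := hα
  obtain ⟨q, rfl⟩ := hcN
  rw [Int.mul_ediv_cancel_left _ hc.ne'] at hlarge
  rcases lt_or_ge a (c * q) with haN | haN
  · rw [pK_eq_partitionCount hD]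
    exact hsmall a (Finset.mem_Ico.2 ⟨hα1, haN⟩) b
      (Finset.mem_Icc.2 ⟨hb, (Int.le_ediv_iff_mul_le hc).2 (by linarith)⟩)
  · have hq : 0 ≤ q := nonneg_of_mul_nonneg_right hN hc
    have hrest : (a - c * q, b - min b q) ∈ cone c := by
      refine ⟨by simp, ?_⟩
      rcases le_total b q with h | h
      · simp [min_eq_left h]; linarith
      · simp only [min_eq_right h]; linarith
    have hle := pK_le_pK_add_of_mem_closure hD
      (cone_subset_closure hgen hrest) (c * q, min b q)
    rw [show ((c * q, min b q) : ℤ × ℤ) + (a - c * q, b - min b q) = (a, b) by ext <;> simp,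
      pK_eq_partitionCount hD (c * q, min b q)] at hle
    have := hlarge (min b q) (Finset.mem_Icc.2 ⟨le_min hb hq, min_le_right _ _⟩)
    omega

theorem exists_mem_pK_eq_of_descent (hD : 2 ≤ D) (C : Set (ℤ × ℤ))
    (hdesc : ∀ α, TotPos D α → α ∉ C → ∃ e : ℤ × ℤ ≃+ ℤ × ℤ,
      (∀ a, TotPos D (e a) ↔ TotPos D a) ∧ (e α ∈ C ∨ (e α).1 < α.1))
    {α : ℤ × ℤ} (hα : TotPos D α) : ∃ β ∈ C, TotPos D β ∧ pK D β = pK D α := by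
  induction h : α.1.toNat using Nat.strong_induction_on generalizing α with
  | _ n ih =>
    by_cases hC : α ∈ C
    · exact ⟨α, hC, hα, rfl⟩
    obtain ⟨e, he, hC' | hlt⟩ := hdesc α hα hC
    · exact ⟨e α, hC', (he α).2 hα, pK_addEquiv e he α⟩
    · have := fst_pos_of_totPos hD ((he α).2 hα)
      obtain ⟨β, hβC, hβ, hpK⟩ := ih _ (by omega) ((he α).2 hα) rfl
      exact ⟨β, hβC, hβ, hpK.trans (pK_addEquiv e he α)⟩

theorem pK_two_ne_seven {α : ℤ × ℤ} (hα : TotPos 2 α) : pK 2 α ≠ 7 := by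
  have htp : ∀ a : ℤ × ℤ, TotPos 2 a ↔ 0 < trace 2 a ∧ 0 < fourNorm 2 a :=
    fun a => totPos_iff (by norm_num)
  have hε : mulCoord 2 (3, 2) (3, -2) = (1, 0) := by decide
  have hε' : mulCoord 2 (3, -2) (3, 2) = (1, 0) := by decide
  have hdesc : ∀ α, TotPos 2 α → α ∉ cone 2 → ∃ e : ℤ × ℤ ≃+ ℤ × ℤ,
      (∀ a, TotPos 2 (e a) ↔ TotPos 2 a) ∧ (e α ∈ cone 2 ∨ (e α).1 < α.1) := by
    rintro ⟨a, b⟩ hα hC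
    simp only [cone, Set.mem_ofPred_eq, not_and_or, not_le] at hC
    rcases lt_or_ge b 0 with hb | hb
    · rcases lt_or_ge a (-2 * b) with hab | hab
      · refine ⟨unitMulEquiv 2 (3, 2) (3, -2) hε,
          totPos_mulCoord_iff (by norm_num) ((htp _).2 (by decide)), Or.inr ?_⟩
        simp [mulCoord]; omega
      · refine ⟨conj 2, totPos_conj_iff, Or.inl ?_⟩
        simp [conj_apply, cone]; omega
    · refine ⟨unitMulEquiv 2 (3, -2) (3, 2) hε',
        totPos_mulCoord_iff (by norm_num) ((htp _).2 (by decide)), Or.inr ?_⟩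
      simp [mulCoord]; omega
  obtain ⟨β, hβC, hβ, hpK⟩ := exists_mem_pK_eq_of_descent (by norm_num) (cone 2) hdesc hα
  rw [← hpK]
  exact pK_ne_seven_of_mem_cone (N := 8) (by norm_num) two_pos (by norm_num) (by norm_num)
    ((htp _).2 (by decide)) (by decide +kernel) (by decide +kernel) hβC
    (fst_pos_of_totPos (by norm_num) hβ)

theorem pK_five_ne_seven {α : ℤ × ℤ} (hα : TotPos 5 α) : pK 5 α ≠ 7 := by
  have htp : ∀ a : ℤ × ℤ, TotPos 5 a ↔ 0 < trace 5 a ∧ 0 < fourNorm 5 a :=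
    fun a => totPos_iff (by norm_num)
  have hε : mulCoord 5 (2, -1) (1, 1) = (1, 0) := by decide
  have hdesc : ∀ α, TotPos 5 α → α ∉ cone 1 → ∃ e : ℤ × ℤ ≃+ ℤ × ℤ,
      (∀ a, TotPos 5 (e a) ↔ TotPos 5 a) ∧ (e α ∈ cone 1 ∨ (e α).1 < α.1) := by
    rintro ⟨x, y⟩ hα hC
    simp only [cone, Set.mem_ofPred_eq, not_and_or, not_le, one_mul] at hC
    rcases lt_or_ge y 0 with hy | hy
    · refine ⟨conj 5, totPos_conj_iff, Or.inr ?_⟩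
      simp [conj_apply]; omega
    · refine ⟨unitMulEquiv 5 (2, -1) (1, 1) hε,
        totPos_mulCoord_iff (by norm_num) ((htp _).2 (by decide)), Or.inr ?_⟩
      simp [mulCoord]; omega
  obtain ⟨β, hβC, hβ, hpK⟩ := exists_mem_pK_eq_of_descent (by norm_num) (cone 1) hdesc hα
  rw [← hpK]
  exact pK_ne_seven_of_mem_cone (N := 4) (by norm_num) one_pos (by norm_num) (by norm_num)
    ((htp _).2 (by decide)) (by decide +kernel) (by decide +kernel) hβC
    (fst_pos_of_totPos (by norm_num) hβ)

theorem snd_eq_zero_of_sub_mem_totNonneg (hD : 6 ≤ D) (hD1 : D % 4 = 1 → 29 ≤ D)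
    {β : ℤ × ℤ} (hβ : TotPos D β) (h5 : (5, 0) - β ∈ totNonneg D) : β.2 = 0 := by
  obtain ⟨ht, hn⟩ := (totPos_iff (by omega)).1 hβ
  obtain ⟨ht5, hn5⟩ := (mem_totNonneg_iff (by omega)).1 h5
  obtain ⟨x, y⟩ := β
  unfold fourNorm disc trace at *
  by_contra hy
  have hy2 : 0 < y ^ 2 := by positivity
  simp only [Prod.fst_sub, Prod.snd_sub] at ht5 hn5
  split_ifs at * with hmod
  · have hD29 := hD1 hmod
    have h1 : 29 < (2 * x + y) ^ 2 := by nlinarith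
    have h2 : 29 ≤ (2 * (5 - x) + (0 - y)) ^ 2 := by nlinarith
    have h3 : 6 ≤ 2 * x + y := by nlinarith
    have h4 : 6 ≤ 2 * (5 - x) + (0 - y) := by nlinarith
    omega
  · have h1 : 6 < x ^ 2 := by nlinarith
    have h2 : 6 ≤ (5 - x) ^ 2 := by nlinarith
    have h3 : 3 ≤ x := by nlinarith
    have h4 : 3 ≤ 5 - x := by nlinarith
    omega

theorem pK_five_eq_seven (hD : 6 ≤ D) (hD1 : D % 4 = 1 → 29 ≤ D) : pK D (5, 0) = 7 := by
  let l : List (ℤ × ℤ) := [(5, 0), (4, 0), (3, 0), (2, 0), (1, 0)]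
  have hl : ∀ β ∈ l, TotPos D β ∧ 0 < AddMonoidHom.fst ℤ ℤ β := by
    simp only [l, List.mem_cons, List.not_mem_nil, or_false]
    rintro β (rfl | rfl | rfl | rfl | rfl) <;> exact ⟨totPos_mk_zero (by norm_num), by simp⟩
  have hparts : ∀ m : Multiset (ℤ × ℤ), (∀ β ∈ m, TotPos D β) → m.sum = (5, 0) →
      ∀ β ∈ m, β ∈ l := by
    intro m hm hsum β hβm
    have h5 := hsum ▸ sub_mem_totNonneg_of_mem hm hβm
    have hx := fst_pos_of_totPos (by omega) (hm β hβm)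
    have hx5 := abs_nonneg _ |>.trans (abs_snd_le_two_mul_fst (by omega) h5)
    obtain ⟨x, y⟩ := β
    obtain rfl : y = 0 := snd_eq_zero_of_sub_mem_totNonneg hD hD1 (hm _ hβm) h5
    simp at hx hx5
    interval_cases x <;> simp [l]
  change Nat.card (Partitions (TotPos D) (5, 0)) = 7
  rw [Nat.card_congr (Partitions.equivEnum (P := fun _ => True) hl (fun _ _ => trivial) hparts),
    Nat.card_eq_finsetCard]
  decide

end RealQuadratic

open RealQuadratic

theorem exists_seven_partitions_iff (D : ℤ) (hD : 2 ≤ D) (hsf : Squarefree D) :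
    (∃ α : ℤ × ℤ, TotPos D α ∧ pK D α = 7) ↔ D ∉ ({2, 5} : Set ℤ) := by
  constructor
  · rintro ⟨α, hα, h7⟩ (rfl | rfl)
    exacts [pK_two_ne_seven hα h7, pK_five_ne_seven hα h7]
  intro hD25
  simp only [Set.mem_insert_iff, Set.mem_singleton_iff, not_or] at hD25
  by_cases hsmall : D = 3 ∨ D = 13 ∨ D = 17 ∨ D = 21
  · refine ⟨(5, 1), ?_⟩
    rw [totPos_iff (by omega), pK_eq_partitionCount hD]
    rcases hsmall with rfl | rfl | rfl | rfl <;> decide +kernel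
  · have hsq : ∀ k : ℤ, 2 ≤ k → D ≠ k * k := fun k hk hDk => by
      have := Int.isUnit_iff.1 (hsf k (hDk ▸ dvd_rfl))
      omega
    have := hsq 2; have := hsq 3; have := hsq 5
    exact ⟨(5, 0), totPos_mk_zero (by norm_num), pK_five_eq_seven (by omega) (by omega)⟩
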